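/- arXiv:2501.06445 — 2 statements merged into one kernel-verified Lean document; each statement's English description precedes it below -/
import Mathlib

section
/- The Moyal-type star product on polynomial functions of Y^A = (y^α, ỹ^{α̇}), defined by f ⋆ g = exp(⟨y ∂₁⟩ + ⟨y ∂₂⟩ + Λ⟨∂₁ ∂₂⟩ + [y ∂₁] + [y ∂₂] + [∂₁ ∂₂]) f(Y₁) g(Y₂)|_{Y₁=Y₂=0}, is associative: (f ⋆ g) ⋆ h = f ⋆ (g ⋆ h) for all polynomials f, g, h. -/
open MvPolynomial

noncomputable section

/-- The antisymmetric ε-symbol with ε^{01} = 1. -/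
def eps : Fin 2 → Fin 2 → ℂ := ![![0, 1], ![-1, 0]]

/-- Spinor variables Y^A = (y^α, ỹ^{α̇}): undotted ⊕ dotted. -/
abbrev Idx := Fin 2 ⊕ Fin 2

/-- Variables for the star-product computation: slot 0 is the output Y,
slots 1 and 2 are the auxiliary Y₁, Y₂. -/
abbrev V3 := Fin 3 × Idx

/-- ⟨y ∂ᵢ⟩ = y^α ∂/∂yᵢ^α. -/
def angY (i : Fin 3) (p : MvPolynomial V3 ℂ) : MvPolynomial V3 ℂ :=
  ∑ a : Fin 2, X ((0 : Fin 3), Sum.inl a) * pderiv (i, Sum.inl a) p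

/-- [y ∂ᵢ] = ỹ^{α̇} ∂/∂ỹᵢ^{α̇}. -/
def sqY (i : Fin 3) (p : MvPolynomial V3 ℂ) : MvPolynomial V3 ℂ :=
  ∑ a : Fin 2, X ((0 : Fin 3), Sum.inr a) * pderiv (i, Sum.inr a) p

/-- ⟨∂ᵢ ∂ⱼ⟩ = ∂ᵢ^α ∂_{jα} (ε-contraction of undotted derivatives). -/
def angDD (i j : Fin 3) (p : MvPolynomial V3 ℂ) : MvPolynomial V3 ℂ :=
  ∑ a : Fin 2, ∑ b : Fin 2, eps a b • pderiv (i, Sum.inl b) (pderiv (j, Sum.inl a) p)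

/-- [∂ᵢ ∂ⱼ] = ∂̃ᵢ^{α̇} ∂̃_{jα̇} (ε-contraction of dotted derivatives). -/
def sqDD (i j : Fin 3) (p : MvPolynomial V3 ℂ) : MvPolynomial V3 ℂ :=
  ∑ a : Fin 2, ∑ b : Fin 2, eps a b • pderiv (i, Sum.inr b) (pderiv (j, Sum.inr a) p)

/-- The bidifferential operator ⟨y∂₁⟩ + ⟨y∂₂⟩ + Λ⟨∂₁∂₂⟩ + [y∂₁] + [y∂₂] + [∂₁∂₂]. -/
def starOp (Λ : ℂ) (p : MvPolynomial V3 ℂ) : MvPolynomial V3 ℂ :=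
  angY 1 p + angY 2 p + Λ • angDD 1 2 p + sqY 1 p + sqY 2 p + sqDD 1 2 p

/-- Exponential of a (locally nilpotent) operator applied to a polynomial; since each
application of `starOp` strictly lowers the degree in the auxiliary variables, the
series truncates at the total degree. -/
def expApply (D : MvPolynomial V3 ℂ → MvPolynomial V3 ℂ) (p : MvPolynomial V3 ℂ) :
    MvPolynomial V3 ℂ :=
  ∑ k ∈ Finset.range (p.totalDegree + 1), ((k.factorial : ℂ))⁻¹ • D^[k] p

/-- Place a polynomial f(Y) into the auxiliary slot i, i.e. f(Yᵢ). -/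
def emb (i : Fin 3) (f : MvPolynomial Idx ℂ) : MvPolynomial V3 ℂ :=
  rename (fun v => (i, v)) f

/-- Set the auxiliary variables Y₁ = Y₂ = 0, keeping the output variables Y. -/
def setAux (p : MvPolynomial V3 ℂ) : MvPolynomial Idx ℂ :=
  aeval (fun v : V3 => if v.1 = 0 then X v.2 else 0) p

/-- The Moyal-type star product
f ⋆ g = exp(⟨y∂₁⟩+⟨y∂₂⟩+Λ⟨∂₁∂₂⟩+[y∂₁]+[y∂₂]+[∂₁∂₂]) f(Y₁) g(Y₂)|_{Y₁=Y₂=0}. -/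
def starP (Λ : ℂ) (f g : MvPolynomial Idx ℂ) : MvPolynomial Idx ℂ :=
  setAux (expApply (starOp Λ) (emb 1 f * emb 2 g))

/-!
All operators involved are locally nilpotent, so their exponentials are finite sums and
`exp (A + B) = exp A ∘ exp B` for commuting `A`, `B`. Splitting off the translation part of
the operator, Taylor's formula gives `f ⋆ g = exp(P₁₂) f(Y₁) g(Y₂)` with all slots identified
afterwards, where `Pᵢⱼ = Λ⟨∂ᵢ∂ⱼ⟩ + [∂ᵢ∂ⱼ]` (`pairing Λ i j`). By the chain rule, merging two
slots turns `P` into the sum of the corresponding `P`'s, so with `f`, `g`, `h` in three slots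
both `(f ⋆ g) ⋆ h` and `f ⋆ (g ⋆ h)` become `exp(P₀₁ + P₀₂ + P₁₂) f(Y₀) g(Y₁) h(Y₂)` with all
slots identified.
-/

namespace StarProduct

open Finset

section LocallyNilpotentExp

variable {M M' : Type*} [AddCommGroup M] [Module ℂ M] [AddCommGroup M'] [Module ℂ M']

def IsLocallyNilpotent (A : Module.End ℂ M) : Prop :=
  ∀ p, ∃ n, (A ^ n) p = 0

/-- `exp A` applied to `p`, for `A` nilpotent at `p` (junk value `0` otherwise). -/
def nilExp (A : Module.End ℂ M) (p : M) : M :=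
  ∑ k ∈ range (sInf {n | (A ^ n) p = 0}), (k.factorial : ℂ)⁻¹ • (A ^ k) p

variable {A B : Module.End ℂ M} {p q : M} {N : ℕ}

lemma pow_apply_eq_zero_of_le {n m : ℕ} (h : (A ^ n) p = 0) (hnm : n ≤ m) : (A ^ m) p = 0 := by
  rw [← pow_sub_mul_pow A hnm, Module.End.mul_apply, h, map_zero]

lemma nilExp_eq_sum (h : (A ^ N) p = 0) :
    nilExp A p = ∑ k ∈ range N, (k.factorial : ℂ)⁻¹ • (A ^ k) p := by
  have hmin : sInf {n | (A ^ n) p = 0} ≤ N := Nat.sInf_le h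
  rw [nilExp, ← sum_range_add_sum_Ico _ hmin, left_eq_add]
  refine sum_eq_zero fun k hk => ?_
  have hpow : (A ^ sInf {n | (A ^ n) p = 0}) p = 0 := Nat.sInf_mem (s := {n | (A ^ n) p = 0}) ⟨N, h⟩
  rw [pow_apply_eq_zero_of_le hpow (mem_Ico.1 hk).1, smul_zero]

lemma nilExp_of_apply_eq_zero (h : A p = 0) : nilExp A p = p := by
  rw [nilExp_eq_sum (N := 1) (by simpa using h)]
  simp

lemma nilExp_add_apply (hp : (A ^ N) p = 0) (hq : (A ^ N) q = 0) :
    nilExp A (p + q) = nilExp A p + nilExp A q := by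
  rw [nilExp_eq_sum (by rw [map_add, hp, hq, add_zero]), nilExp_eq_sum hp, nilExp_eq_sum hq,
    ← sum_add_distrib]
  simp only [map_add, smul_add]

lemma nilExp_conj {A' : Module.End ℂ M'} (R : M →ₗ[ℂ] M') (hR : ∀ q, A' (R q) = R (A q))
    (hp : (A ^ N) p = 0) : nilExp A' (R p) = R (nilExp A p) := by
  have hpow (k : ℕ) (q : M) : (A' ^ k) (R q) = R ((A ^ k) q) := by
    induction k generalizing q with
    | zero => simp
    | succ k ih => rw [pow_succ', pow_succ', Module.End.mul_apply, Module.End.mul_apply, ih, hR]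
  rw [nilExp_eq_sum (N := N) (by rw [hpow, hp, map_zero]), nilExp_eq_sum hp, map_sum]
  simp only [hpow, map_smul]

/-- The Cauchy product formula for truncated exponential series. -/
lemma sum_range_antidiagonal_choose_smul {u : ℕ → ℕ → M} (hu : ∀ i j, N ≤ i + j → u i j = 0) :
    ∑ k ∈ range N, (k.factorial : ℂ)⁻¹ • ∑ x ∈ antidiagonal k, k.choose x.1 • u x.1 x.2 =
      ∑ i ∈ range N, (i.factorial : ℂ)⁻¹ • ∑ j ∈ range N, (j.factorial : ℂ)⁻¹ • u i j := by
  have hfac (i j : ℕ) : ((i + j).factorial : ℂ)⁻¹ * ((i + j).choose i : ℂ) =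
      (i.factorial : ℂ)⁻¹ * (j.factorial : ℂ)⁻¹ := by
    have hchoose : ((i + j).choose j : ℂ) ≠ 0 := by
      exact_mod_cast (Nat.choose_pos (Nat.le_add_left j i)).ne'
    rw [Nat.choose_symm_add, ← Nat.add_choose_mul_factorial_mul_factorial i j]
    push_cast
    field_simp
  let c : ℕ × ℕ → ℂ := fun x => (x.1.factorial : ℂ)⁻¹ * (x.2.factorial : ℂ)⁻¹
  have hfiber : ∀ k ∈ range N,
      {x ∈ range N ×ˢ range N | x.1 + x.2 < N ∧ x.1 + x.2 = k} = antidiagonal k := by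
    intro k hk
    ext x
    simp only [mem_filter, mem_product, mem_range, HasAntidiagonal.mem_antidiagonal] at hk ⊢
    omega
  calc _ = ∑ k ∈ range N, ∑ x ∈ antidiagonal k, c x • u x.1 x.2 := by
        refine sum_congr rfl fun k _ => ?_
        rw [smul_sum]
        refine sum_congr rfl fun x hx => ?_
        rw [HasAntidiagonal.mem_antidiagonal] at hx
        subst hx
        rw [← Nat.cast_smul_eq_nsmul ℂ, smul_smul, hfac]
    _ = ∑ x ∈ range N ×ˢ range N with x.1 + x.2 < N, c x • u x.1 x.2 := by
        rw [← sum_fiberwise_of_maps_to (s := {x ∈ range N ×ˢ range N | x.1 + x.2 < N})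
          (g := fun x => x.1 + x.2) (t := range N) fun x hx => mem_range.2 (mem_filter.1 hx).2]
        refine sum_congr rfl fun k hk => ?_
        rw [filter_filter, hfiber k hk]
    _ = ∑ x ∈ range N ×ˢ range N, c x • u x.1 x.2 :=
        sum_filter_of_ne fun x _ hx => by
          by_contra h
          exact hx (by rw [hu x.1 x.2 (not_lt.1 h), smul_zero])
    _ = _ := by
        rw [sum_product]
        simp only [smul_sum, smul_smul, c]

lemma nilExp_add (hAB : Commute A B) (hA : IsLocallyNilpotent A) (hB : IsLocallyNilpotent B)
    (p : M) : nilExp (A + B) p = nilExp A (nilExp B p) := by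
  obtain ⟨b, hb⟩ := hB p
  choose a ha using fun j => hA ((B ^ j) p)
  set N := (range b).sup a + b
  have hvanish : ∀ i j, N ≤ i + j → (A ^ i) ((B ^ j) p) = 0 := by
    intro i j hij
    by_cases hj : b ≤ j
    · rw [pow_apply_eq_zero_of_le hb hj, map_zero]
    · have : a j ≤ (range b).sup a := le_sup (mem_range.2 (by omega))
      exact pow_apply_eq_zero_of_le (ha j) (by omega)
  have hpow_add (k : ℕ) : ((A + B) ^ k) p =
      ∑ x ∈ antidiagonal k, k.choose x.1 • (A ^ x.1) ((B ^ x.2) p) := by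
    rw [hAB.add_pow', LinearMap.sum_apply]
    rfl
  have hB' : (B ^ N) p = 0 := pow_apply_eq_zero_of_le hb (by omega)
  have hA' : (A ^ N) (nilExp B p) = 0 := by
    rw [nilExp_eq_sum hB', map_sum]
    exact sum_eq_zero fun j _ => by rw [map_smul, hvanish N j (by omega), smul_zero]
  have hAB' : ((A + B) ^ N) p = 0 := by
    rw [hpow_add]
    refine sum_eq_zero fun x hx => ?_
    rw [hvanish _ _ (HasAntidiagonal.mem_antidiagonal.1 hx).ge, smul_zero]
  rw [nilExp_eq_sum hAB', nilExp_eq_sum hA', nilExp_eq_sum hB']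
  simp only [hpow_add, map_sum, map_smul]
  exact sum_range_antidiagonal_choose_smul hvanish

end LocallyNilpotentExp

section Derivation

variable {R : Type*} [CommRing R] [Algebra ℂ R] (D : Derivation ℂ R R) {a : R}

lemma derivation_pow_succ_apply_mul (hD : D (D a) = 0) (p : R) (k : ℕ) :
    (D.toLinearMap ^ (k + 1)) (a * p) =
      a * (D.toLinearMap ^ (k + 1)) p + (k + 1 : ℂ) • (D a * (D.toLinearMap ^ k) p) := by
  induction k with
  | zero => simp [Derivation.leibniz, mul_comm]
  | succ k ih =>
    have hstep (j : ℕ) (q : R) : D ((D.toLinearMap ^ j) q) = (D.toLinearMap ^ (j + 1)) q := by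
      rw [pow_succ', Module.End.mul_apply]
      rfl
    rw [pow_succ', Module.End.mul_apply, ih]
    simp only [Module.End.mul_apply, Derivation.coeFn_coe, map_add, map_smul,
      Derivation.leibniz, hD, hstep, smul_eq_mul, mul_zero, add_zero]
    simp only [Algebra.smul_def]
    push_cast
    ring

lemma nilExp_derivation_mul (hD : D (D a) = 0) {p : R} {n : ℕ}
    (hp : (D.toLinearMap ^ n) p = 0) :
    nilExp D.toLinearMap (a * p) = (a + D a) * nilExp D.toLinearMap p := by
  have hap : (D.toLinearMap ^ (n + 1)) (a * p) = 0 := by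
    rw [derivation_pow_succ_apply_mul D hD, hp, pow_succ', Module.End.mul_apply, hp]
    simp
  have hfac (k : ℕ) : (((k + 1).factorial : ℂ))⁻¹ * (k + 1 : ℂ) = ((k.factorial : ℂ))⁻¹ := by
    rw [Nat.factorial_succ]
    push_cast
    field_simp
  rw [nilExp_eq_sum hap, add_mul]
  nth_rw 1 [nilExp_eq_sum (pow_apply_eq_zero_of_le hp n.le_succ)]
  rw [nilExp_eq_sum hp, sum_range_succ', sum_range_succ', mul_add, mul_sum, mul_sum]
  simp only [derivation_pow_succ_apply_mul D hD, smul_add, sum_add_distrib, smul_smul, hfac,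
    mul_smul_comm]
  simp only [Nat.factorial_zero, Nat.cast_one, inv_one, pow_zero, Module.End.one_apply, one_smul]
  abel

end Derivation

section PartialDerivatives

lemma pderiv_pderiv_comm {σ : Type*} (u v : σ) (p : MvPolynomial σ ℂ) :
    pderiv u (pderiv v p) = pderiv v (pderiv u p) := by
  classical
  by_cases h : u = v
  · rw [h]
  ext m
  simp only [coeff_pderiv, Finsupp.add_apply, Finsupp.single_apply, h, Ne.symm h, if_false,
    add_zero]
  rw [add_right_comm m]
  ring

lemma commute_pderiv {σ : Type*} (u v : σ) :
    Commute (pderiv u : Derivation ℂ (MvPolynomial σ ℂ) _).toLinearMap (pderiv v).toLinearMap :=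
  LinearMap.ext fun p => pderiv_pderiv_comm u v p

end PartialDerivatives

section WeightFiltration

variable {σ : Type*} (w : σ → ℕ)

def weightLT (n : ℕ) : Submodule ℂ (MvPolynomial σ ℂ) :=
  restrictSupport ℂ {m | m.weight w < n}

variable {w} {p : MvPolynomial σ ℂ} {n : ℕ}

lemma mem_weightLT : p ∈ weightLT w n ↔ ∀ m ∈ p.support, m.weight w < n :=
  mem_restrictSupport_iff ℂ

lemma weightLT_mono {n n' : ℕ} (h : n ≤ n') : weightLT w n ≤ weightLT w n' :=
  restrictSupport_mono ℂ fun _ hm => lt_of_lt_of_le hm h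

lemma eq_zero_of_mem_weightLT_zero (hp : p ∈ weightLT w 0) : p = 0 := by
  by_contra h
  obtain ⟨m, hm⟩ := support_nonempty.2 h
  exact Nat.not_lt_zero _ (mem_weightLT.1 hp m hm)

variable (w) in
lemma mem_weightLT_sup_succ (p : MvPolynomial σ ℂ) :
    p ∈ weightLT w (p.support.sup (Finsupp.weight w) + 1) :=
  mem_weightLT.2 fun _ hm => Nat.lt_succ_of_le (le_sup (f := Finsupp.weight w) hm)

lemma mem_weightLT_totalDegree_succ (hw : ∀ v, w v ≤ 1) (p : MvPolynomial σ ℂ) :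
    p ∈ weightLT w (p.totalDegree + 1) := by
  refine mem_weightLT.2 fun m hm => Nat.lt_succ_of_le (le_trans ?_ (le_totalDegree hm))
  rw [Finsupp.weight_apply]
  exact Finset.sum_le_sum fun v _ => by simpa using Nat.mul_le_mul_left (m v) (hw v)

lemma pderiv_mem_weightLT (u : σ) (hp : p ∈ weightLT w (n + w u)) :
    pderiv u p ∈ weightLT w n := by
  refine mem_weightLT.2 fun m hm => ?_
  have hcoeff : coeff (m + Finsupp.single u 1) p ≠ 0 := by
    intro h
    rw [mem_support_iff, coeff_pderiv, h, zero_mul] at hm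
    exact hm rfl
  have := mem_weightLT.1 hp _ (mem_support_iff.2 hcoeff)
  rw [map_add, Finsupp.weight_single, one_smul] at this
  omega

lemma pderiv_mem_weightLT_of_mem (u : σ) (hp : p ∈ weightLT w n) :
    pderiv u p ∈ weightLT w n :=
  pderiv_mem_weightLT u (weightLT_mono (Nat.le_add_right n (w u)) hp)

lemma X_mul_mem_weightLT (u : σ) (hp : p ∈ weightLT w n) : X u * p ∈ weightLT w (n + w u) := by
  refine mem_weightLT.2 fun m hm => ?_
  rw [support_X_mul, mem_map] at hm
  obtain ⟨m', hm', rfl⟩ := hm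
  have := mem_weightLT.1 hp m' hm'
  simp only [addLeftEmbedding_apply, map_add, Finsupp.weight_single, one_smul]
  omega

variable (w) in
def LowersWeight (A : Module.End ℂ (MvPolynomial σ ℂ)) : Prop :=
  ∀ n, ∀ p ∈ weightLT w (n + 1), A p ∈ weightLT w n

variable {A B : Module.End ℂ (MvPolynomial σ ℂ)}

lemma LowersWeight.pow_apply_eq_zero (hA : LowersWeight w A) (hp : p ∈ weightLT w n) :
    (A ^ n) p = 0 := by
  induction n generalizing p with
  | zero => simpa using eq_zero_of_mem_weightLT_zero hp
  | succ n ih => rw [pow_succ, Module.End.mul_apply, ih (hA n p hp)]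

lemma LowersWeight.isLocallyNilpotent (hA : LowersWeight w A) : IsLocallyNilpotent A :=
  fun p => ⟨_, hA.pow_apply_eq_zero (mem_weightLT_sup_succ w p)⟩

lemma LowersWeight.add (hA : LowersWeight w A) (hB : LowersWeight w B) :
    LowersWeight w (A + B) :=
  fun n p hp => add_mem (hA n p hp) (hB n p hp)

lemma LowersWeight.smul (hA : LowersWeight w A) (c : ℂ) : LowersWeight w (c • A) :=
  fun n p hp => Submodule.smul_mem _ c (hA n p hp)

lemma LowersWeight.sum {ι : Type*} {s : Finset ι} {A : ι → Module.End ℂ (MvPolynomial σ ℂ)}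
    (hA : ∀ i ∈ s, LowersWeight w (A i)) : LowersWeight w (∑ i ∈ s, A i) := by
  intro n p hp
  rw [LinearMap.sum_apply]
  exact Submodule.sum_mem _ fun i hi => hA i hi n p hp

end WeightFiltration

section Slots

variable {F F' : Type*}

def slotMap (g : F → F') : F × Idx → F' × Idx := Prod.map g id

/-- `f(Yᵢ)`; `emb` is the case `F = Fin 3`. -/
def slotEmb (i : F) (f : MvPolynomial Idx ℂ) : MvPolynomial (F × Idx) ℂ :=
  rename (fun v => (i, v)) f

lemma rename_slotMap_slotEmb (g : F → F') (i : F) (f : MvPolynomial Idx ℂ) :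
    rename (slotMap g) (slotEmb i f) = slotEmb (g i) f := by
  rw [slotEmb, rename_rename]
  rfl

lemma slotEmb_eq_rename_slotMap {g : F → F} {k : F} (hk : g k = k) (f : MvPolynomial Idx ℂ) :
    slotEmb k f = rename (slotMap g) (slotEmb k f) := by
  rw [rename_slotMap_slotEmb, hk]

lemma rename_snd_rename_slotMap (g : F → F') (p : MvPolynomial (F × Idx) ℂ) :
    rename Prod.snd (rename (slotMap g) p) = rename Prod.snd p := by
  rw [rename_rename]
  rfl

lemma pderiv_slotEmb_of_ne {i k : F} (h : k ≠ i) (v : Idx) (f : MvPolynomial Idx ℂ) :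
    pderiv (k, v) (slotEmb i f) = 0 := by
  classical
  refine pderiv_eq_zero_of_notMem_vars fun hmem => ?_
  obtain ⟨u, -, hu⟩ := Finset.mem_image.1 (vars_rename _ f hmem)
  exact h (congrArg Prod.fst hu).symm

/-- `⟨∂ᵢ∂ⱼ⟩` for `e = Sum.inl`, `[∂ᵢ∂ⱼ]` for `e = Sum.inr`. -/
def contraction (e : Fin 2 → Idx) (i j : F) : Module.End ℂ (MvPolynomial (F × Idx) ℂ) :=
  ∑ a : Fin 2, ∑ b : Fin 2,
    eps a b • ((pderiv (i, e b)).toLinearMap * (pderiv (j, e a)).toLinearMap)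

def pairing (Λ : ℂ) (i j : F) : Module.End ℂ (MvPolynomial (F × Idx) ℂ) :=
  Λ • contraction Sum.inl i j + contraction Sum.inr i j

lemma contraction_apply (e : Fin 2 → Idx) (i j : F) (p : MvPolynomial (F × Idx) ℂ) :
    contraction e i j p =
      ∑ a : Fin 2, ∑ b : Fin 2, eps a b • pderiv (i, e b) (pderiv (j, e a) p) := by
  simp [contraction]

lemma commute_contraction (e e' : Fin 2 → Idx) (i j k l : F) :
    Commute (contraction e i j) (contraction e' k l) := by
  refine .sum_left _ _ _ fun a _ => .sum_left _ _ _ fun b _ => ?_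
  refine .sum_right _ _ _ fun c _ => .sum_right _ _ _ fun d _ => ?_
  refine ((Commute.mul_left ?_ ?_).smul_left _).smul_right _ <;>
    exact (commute_pderiv _ _).mul_right (commute_pderiv _ _)

lemma commute_pairing (Λ : ℂ) (i j k l : F) : Commute (pairing Λ i j) (pairing Λ k l) := by
  unfold pairing
  refine .add_left (.add_right ?_ ?_) (.add_right ?_ ?_) <;>
    simp only [Commute.smul_left, Commute.smul_right, commute_contraction]

lemma lowersWeight_pairing {w : F × Idx → ℕ} {j : F} (hj : ∀ v, w (j, v) = 1) (Λ : ℂ) (i : F) :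
    LowersWeight w (pairing Λ i j) := by
  have hcontr (e : Fin 2 → Idx) : LowersWeight w (contraction e i j) := by
    refine LowersWeight.sum fun a _ => LowersWeight.sum fun b _ => LowersWeight.smul ?_ _
    intro n p hp
    exact pderiv_mem_weightLT_of_mem _ (pderiv_mem_weightLT _ (by rwa [hj]))
  exact (hcontr _).smul Λ |>.add (hcontr _)

lemma pairing_mul_of_pderiv_eq_zero {Λ : ℂ} {i j : F} {c : MvPolynomial (F × Idx) ℂ}
    (hi : ∀ v, pderiv (i, v) c = 0) (hj : ∀ v, pderiv (j, v) c = 0)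
    (q : MvPolynomial (F × Idx) ℂ) :
    pairing Λ i j (q * c) = pairing Λ i j q * c := by
  simp only [pairing, LinearMap.add_apply, LinearMap.smul_apply, contraction_apply, pderiv_mul,
    hi, hj, mul_zero, add_zero, sum_mul, smul_mul_assoc, add_mul]

lemma pderiv_rename_slotMap (g : F → F') {i' : F'} {S : Finset F} (hS : ∀ i, g i = i' ↔ i ∈ S)
    (v : Idx) (p : MvPolynomial (F × Idx) ℂ) :
    pderiv (i', v) (rename (slotMap g) p) = ∑ i ∈ S, rename (slotMap g) (pderiv (i, v) p) := by
  classical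
  induction p using MvPolynomial.induction_on with
  | C a => simp
  | add p q hp hq => simp only [map_add, hp, hq, sum_add_distrib]
  | mul_X p x hx =>
    obtain ⟨k, u⟩ := x
    simp only [map_mul, rename_X, pderiv_mul, hx, pderiv_X, Pi.single_apply, map_add,
      sum_add_distrib, sum_mul, mul_ite, mul_one, mul_zero]
    congr 1
    by_cases hu : u = v
    · simp [slotMap, hu, hS, apply_ite (rename (Prod.map g id))]
    · simp [slotMap, hu]

lemma contraction_rename_slotMap (g : F → F') {i' j' : F'} {I J : Finset F}
    (hI : ∀ i, g i = i' ↔ i ∈ I) (hJ : ∀ j, g j = j' ↔ j ∈ J) (e : Fin 2 → Idx)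
    (q : MvPolynomial (F × Idx) ℂ) :
    contraction e i' j' (rename (slotMap g) q) =
      ∑ j ∈ J, ∑ i ∈ I, rename (slotMap g) (contraction e i j q) := by
  simp only [contraction_apply, pderiv_rename_slotMap g hJ, pderiv_rename_slotMap g hI, map_sum,
    map_add, map_smul, Fin.sum_univ_two, smul_sum, sum_add_distrib]

lemma pairing_rename_slotMap (g : F → F') {i' j' : F'} {I J : Finset F}
    (hI : ∀ i, g i = i' ↔ i ∈ I) (hJ : ∀ j, g j = j' ↔ j ∈ J) (Λ : ℂ)
    (q : MvPolynomial (F × Idx) ℂ) :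
    pairing Λ i' j' (rename (slotMap g) q) =
      rename (slotMap g) ((∑ j ∈ J, ∑ i ∈ I, pairing Λ i j) q) := by
  simp only [pairing, LinearMap.add_apply, LinearMap.smul_apply, LinearMap.sum_apply,
    contraction_rename_slotMap g hI hJ, map_sum, map_add, map_smul, smul_sum, sum_add_distrib]

lemma isLocallyNilpotent_sum_pairing (Λ : ℂ) (I J : Finset F) :
    IsLocallyNilpotent (∑ j ∈ J, ∑ i ∈ I, pairing Λ i j) :=
  LowersWeight.isLocallyNilpotent (w := fun _ => 1) <|
    .sum fun _ _ => .sum fun i _ => lowersWeight_pairing (fun _ => rfl) Λ i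

lemma isLocallyNilpotent_pairing (Λ : ℂ) (i j : F) : IsLocallyNilpotent (pairing Λ i j) :=
  (lowersWeight_pairing (w := fun _ => 1) (fun _ => rfl) Λ i).isLocallyNilpotent

lemma rename_snd_nilExp_pairing_rename_slotMap (g : F → F') {i' j' : F'} {I J : Finset F}
    (hI : ∀ i, g i = i' ↔ i ∈ I) (hJ : ∀ j, g j = j' ↔ j ∈ J) (Λ : ℂ)
    (q : MvPolynomial (F × Idx) ℂ) :
    rename Prod.snd (nilExp (pairing Λ i' j') (rename (slotMap g) q)) =
      rename Prod.snd (nilExp (∑ j ∈ J, ∑ i ∈ I, pairing Λ i j) q) := by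
  obtain ⟨N, hN⟩ := isLocallyNilpotent_sum_pairing Λ I J q
  have hconj :=
    nilExp_conj (rename (slotMap g)).toLinearMap (pairing_rename_slotMap g hI hJ Λ) hN
  rw [AlgHom.toLinearMap_apply, AlgHom.toLinearMap_apply] at hconj
  rw [hconj, rename_snd_rename_slotMap]

def pairExp (Λ : ℂ) (i j : F) (f g : MvPolynomial Idx ℂ) : MvPolynomial (F × Idx) ℂ :=
  nilExp (pairing Λ i j) (slotEmb i f * slotEmb j g)

lemma rename_slotMap_pairExp {g : F → F'} (hg : g.Injective) (Λ : ℂ) (i j : F)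
    (f h : MvPolynomial Idx ℂ) :
    rename (slotMap g) (pairExp Λ i j f h) = pairExp Λ (g i) (g j) f h := by
  have hfiber (k : F) : ∀ x, g x = g k ↔ x ∈ ({k} : Finset F) := by simp [hg.eq_iff]
  obtain ⟨N, hN⟩ := isLocallyNilpotent_pairing Λ i j (slotEmb i f * slotEmb j h)
  have hconj := nilExp_conj (rename (slotMap g)).toLinearMap (fun q => by
    simpa using pairing_rename_slotMap g (hfiber i) (hfiber j) Λ q) hN
  rw [AlgHom.toLinearMap_apply, AlgHom.toLinearMap_apply, map_mul, rename_slotMap_slotEmb,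
    rename_slotMap_slotEmb] at hconj
  exact hconj.symm

lemma pairExp_mul_slotEmb {Λ : ℂ} {i j k : F} (hki : k ≠ i) (hkj : k ≠ j)
    (f g h : MvPolynomial Idx ℂ) :
    pairExp Λ i j f g * slotEmb k h =
      nilExp (pairing Λ i j) (slotEmb i f * slotEmb j g * slotEmb k h) := by
  obtain ⟨N, hN⟩ := isLocallyNilpotent_pairing Λ i j (slotEmb i f * slotEmb j g)
  refine (nilExp_conj (LinearMap.mulRight ℂ (slotEmb k h)) (fun q => ?_) hN).symm
  exact pairing_mul_of_pderiv_eq_zero (pderiv_slotEmb_of_ne hki.symm · h)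
    (pderiv_slotEmb_of_ne hkj.symm · h) q

end Slots

section Translation

variable {F : Type*}

def translation (z i : F) :
    Derivation ℂ (MvPolynomial (F × Idx) ℂ) (MvPolynomial (F × Idx) ℂ) :=
  ∑ v : Idx, (X (z, v) : MvPolynomial (F × Idx) ℂ) • pderiv (i, v)

lemma translation_apply (z i : F) (p : MvPolynomial (F × Idx) ℂ) :
    translation z i p = ∑ v : Idx, X (z, v) * pderiv (i, v) p := by
  rw [translation, ← Derivation.coeFnAddMonoidHom_apply, map_sum, Finset.sum_apply]
  simp [Derivation.coeFnAddMonoidHom_apply, Derivation.smul_apply]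

lemma translation_X [DecidableEq F] (z i k : F) (u : Idx) :
    translation z i (X (k, u)) = if k = i then X (z, u) else 0 := by
  rw [translation_apply]
  by_cases hk : k = i
  · subst hk
    simp [pderiv_X, Pi.single_apply]
  · simp [pderiv_X, hk]

lemma translation_pderiv {z k : F} (hk : k ≠ z) (u : Idx) (i : F)
    (p : MvPolynomial (F × Idx) ℂ) :
    translation z i (pderiv (k, u) p) = pderiv (k, u) (translation z i p) := by
  have hX (v : Idx) : pderiv (k, u) (X (z, v) : MvPolynomial (F × Idx) ℂ) = 0 :=
    pderiv_X_of_ne fun h => hk (congrArg Prod.fst h).symm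
  simp [translation_apply, hX, pderiv_pderiv_comm (k, u)]

lemma commute_translation_pairing {z i j : F} (hi : i ≠ z) (hj : j ≠ z) (k : F) (Λ : ℂ) :
    Commute (translation z k).toLinearMap (pairing Λ i j) := by
  refine LinearMap.ext fun p => ?_
  simp [pairing, contraction_apply, translation_pderiv hi, translation_pderiv hj]

lemma lowersWeight_translation {w : F × Idx → ℕ} {z i : F} (hz : ∀ v, w (z, v) = 0)
    (hi : ∀ v, w (i, v) = 1) : LowersWeight w (translation z i).toLinearMap := by
  intro n p hp
  rw [Derivation.coeFn_coe, translation_apply]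
  refine Submodule.sum_mem _ fun v _ => ?_
  have hder : pderiv (i, v) p ∈ weightLT w n := pderiv_mem_weightLT (i, v) (by rwa [hi])
  simpa [hz] using X_mul_mem_weightLT (z, v) hder

end Translation

section Bridge

def auxWeight : V3 → ℕ := fun x => if x.1 = 0 then 0 else 1

def shift : Derivation ℂ (MvPolynomial V3 ℂ) (MvPolynomial V3 ℂ) :=
  translation 0 1 + translation 0 2

lemma starOp_eq (Λ : ℂ) : starOp Λ = ⇑(shift.toLinearMap + pairing Λ (1 : Fin 3) 2) := by
  funext p
  simp only [starOp, angY, sqY, angDD, sqDD, LinearMap.add_apply, Derivation.coeFn_coe,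
    shift, Derivation.add_apply, translation_apply, pairing, LinearMap.smul_apply,
    contraction_apply, Fintype.sum_sum_type]
  abel

lemma lowersWeight_shift : LowersWeight auxWeight shift.toLinearMap := by
  rw [shift, Derivation.coe_add_linearMap]
  exact (lowersWeight_translation (by simp [auxWeight]) (by simp [auxWeight])).add
    (lowersWeight_translation (by simp [auxWeight]) (by simp [auxWeight]))

lemma shift_X (k : Fin 3) (u : Idx) : shift (X (k, u)) = if k = 0 then 0 else X (0, u) := by
  fin_cases k <;> simp [shift, Derivation.add_apply, translation_X]

/-- Taylor's formula: `exp shift` substitutes `Yᵢ ↦ Yᵢ + Y` (`i = 1, 2`), so setting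
`Y₁ = Y₂ = 0` afterwards identifies all slots. -/
lemma setAux_nilExp_shift (p : MvPolynomial V3 ℂ) :
    setAux (nilExp shift.toLinearMap p) = rename Prod.snd p := by
  have hnil := lowersWeight_shift.isLocallyNilpotent
  induction p using MvPolynomial.induction_on with
  | C a =>
    rw [nilExp_of_apply_eq_zero (by simp)]
    simp [setAux]
  | add p q hp hq =>
    obtain ⟨n, hn⟩ := hnil p
    obtain ⟨m, hm⟩ := hnil q
    rw [nilExp_add_apply (pow_apply_eq_zero_of_le hn (le_max_left n m))
      (pow_apply_eq_zero_of_le hm (le_max_right n m))]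
    simp only [setAux, map_add] at hp hq ⊢
    rw [hp, hq]
  | mul_X p u hp =>
    obtain ⟨k, v⟩ := u
    obtain ⟨n, hn⟩ := hnil p
    have hshift : shift (shift (X (k, v))) = 0 := by
      rw [shift_X]
      split_ifs <;> simp [shift_X]
    rw [mul_comm, nilExp_derivation_mul shift hshift hn]
    simp only [setAux, map_mul] at hp ⊢
    rw [hp, shift_X]
    split_ifs with hk <;> simp [hk]

lemma starP_eq_rename_snd_pairExp_one_two (Λ : ℂ) (f g : MvPolynomial Idx ℂ) :
    starP Λ f g = rename Prod.snd (pairExp Λ (1 : Fin 3) 2 f g) := by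
  let p := emb 1 f * emb 2 g
  have hpairing : LowersWeight auxWeight (pairing Λ (1 : Fin 3) 2) :=
    lowersWeight_pairing (by simp [auxWeight]) Λ 1
  have hp : ((shift.toLinearMap + pairing Λ (1 : Fin 3) 2) ^ (p.totalDegree + 1)) p = 0 :=
    (lowersWeight_shift.add hpairing).pow_apply_eq_zero
      (mem_weightLT_totalDegree_succ (fun x => by unfold auxWeight; split <;> omega) p)
  have hcomm : Commute shift.toLinearMap (pairing Λ (1 : Fin 3) 2) := by
    rw [shift, Derivation.coe_add_linearMap]
    exact (commute_translation_pairing (by decide) (by decide) 1 Λ).add_left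
      (commute_translation_pairing (by decide) (by decide) 2 Λ)
  rw [starP, expApply, starOp_eq]
  simp only [← Module.End.coe_pow]
  rw [← nilExp_eq_sum hp, nilExp_add hcomm lowersWeight_shift.isLocallyNilpotent
    hpairing.isLocallyNilpotent, setAux_nilExp_shift]
  rfl

end Bridge

section TwoSlots

variable {F : Type*}

lemma pairExp_eq_rename_slotMap {i j : F} (hij : i ≠ j) (Λ : ℂ) (f g : MvPolynomial Idx ℂ) :
    pairExp Λ i j f g = rename (slotMap ![i, j]) (pairExp Λ (0 : Fin 2) 1 f g) := by
  have hinj : Function.Injective ![i, j] := by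
    intro a b hab
    fin_cases a <;> fin_cases b <;> simp_all [eq_comm]
  rw [rename_slotMap_pairExp hinj]
  rfl

lemma starP_eq_rename_snd_pairExp {i j : F} (hij : i ≠ j) (Λ : ℂ) (f g : MvPolynomial Idx ℂ) :
    starP Λ f g = rename Prod.snd (pairExp Λ i j f g) := by
  rw [starP_eq_rename_snd_pairExp_one_two,
    pairExp_eq_rename_slotMap (by decide : (1 : Fin 3) ≠ 2), pairExp_eq_rename_slotMap hij,
    rename_snd_rename_slotMap, rename_snd_rename_slotMap]

lemma slotEmb_starP {i j k : F} (hij : i ≠ j) {μ : F → F} (hi : μ i = k) (hj : μ j = k) (Λ : ℂ)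
    (f g : MvPolynomial Idx ℂ) :
    slotEmb k (starP Λ f g) = rename (slotMap μ) (pairExp Λ i j f g) := by
  rw [starP_eq_rename_snd_pairExp (i := (0 : Fin 2)) (j := 1) (by decide),
    pairExp_eq_rename_slotMap hij, slotEmb, rename_rename, rename_rename]
  congr 2
  funext x
  obtain ⟨a, v⟩ := x
  fin_cases a <;> simp [slotMap, hi, hj]

lemma commute_sum_pairing (Λ : ℂ) (I J : Finset F) (k l : F) :
    Commute (∑ j ∈ J, ∑ i ∈ I, pairing Λ i j) (pairing Λ k l) :=
  .sum_left _ _ _ fun _ _ => .sum_left _ _ _ fun _ _ => commute_pairing Λ _ _ k l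

end TwoSlots

lemma starP_starP_left (Λ : ℂ) (f g h : MvPolynomial Idx ℂ) :
    starP Λ (starP Λ f g) h =
      rename Prod.snd (nilExp (pairing Λ (0 : Fin 3) 1 + pairing Λ 0 2 + pairing Λ 1 2)
        (slotEmb 0 f * slotEmb 1 g * slotEmb 2 h)) := by
  have hsum : ∑ j ∈ {2}, ∑ i ∈ {0, 1}, pairing Λ i j + pairing Λ 0 1 =
      pairing Λ (0 : Fin 3) 1 + pairing Λ 0 2 + pairing Λ 1 2 := by
    rw [sum_singleton, sum_pair (by decide)]
    abel
  rw [starP_eq_rename_snd_pairExp (i := (0 : Fin 3)) (j := 2) (by decide), pairExp,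
    slotEmb_starP (i := 0) (j := 1) (k := 0) (μ := ![0, 0, 2]) (by decide) rfl rfl]
  conv_lhs => rw [slotEmb_eq_rename_slotMap (g := ![0, 0, 2]) (k := 2) rfl h]
  rw [← map_mul, rename_snd_nilExp_pairing_rename_slotMap ![0, 0, 2] (I := {0, 1}) (J := {2})
      (by decide) (by decide),
    pairExp_mul_slotEmb (by decide) (by decide), ← nilExp_add (commute_sum_pairing Λ _ _ 0 1)
      (isLocallyNilpotent_sum_pairing Λ _ _) (isLocallyNilpotent_pairing Λ 0 1),
    hsum]

lemma starP_starP_right (Λ : ℂ) (f g h : MvPolynomial Idx ℂ) :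
    starP Λ f (starP Λ g h) =
      rename Prod.snd (nilExp (pairing Λ (0 : Fin 3) 1 + pairing Λ 0 2 + pairing Λ 1 2)
        (slotEmb 0 f * slotEmb 1 g * slotEmb 2 h)) := by
  have hsum : ∑ j ∈ {1, 2}, ∑ i ∈ {0}, pairing Λ i j + pairing Λ 1 2 =
      pairing Λ (0 : Fin 3) 1 + pairing Λ 0 2 + pairing Λ 1 2 := by
    rw [sum_pair (by decide), sum_singleton, sum_singleton]
  rw [starP_eq_rename_snd_pairExp (i := (0 : Fin 3)) (j := 1) (by decide), pairExp,
    slotEmb_starP (i := 1) (j := 2) (k := 1) (μ := ![0, 1, 1]) (by decide) rfl rfl]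
  conv_lhs => rw [slotEmb_eq_rename_slotMap (g := ![0, 1, 1]) (k := 0) rfl f]
  rw [← map_mul, rename_snd_nilExp_pairing_rename_slotMap ![0, 1, 1] (I := {0}) (J := {1, 2})
      (by decide) (by decide),
    mul_comm, pairExp_mul_slotEmb (by decide) (by decide), ← nilExp_add
      (commute_sum_pairing Λ _ _ 1 2) (isLocallyNilpotent_sum_pairing Λ _ _)
      (isLocallyNilpotent_pairing Λ 1 2),
    hsum, ← mul_rotate]

end StarProduct

/-- The star product is associative. -/
theorem starP_assoc (Λ : ℂ) (f g h : MvPolynomial Idx ℂ) :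
    starP Λ (starP Λ f g) h = starP Λ f (starP Λ g h) := by
  rw [StarProduct.starP_starP_left, StarProduct.starP_starP_right]
end
end

section
/- Define U(ω, C, C) as the sum of three integral sub-vertices U_{ω,C,C} + U_{C,ω,C} + U_{C,C,ω} over the unit square in (u,v), as given by: U_{ω,C,C} = +∫₀¹∫₀¹ e^{(1−u)⟨y∂₃⟩ + u⟨y∂₂⟩}[2 + (1−v)⟨∂₁∂₃⟩ + v⟨∂₁∂₂⟩](ϖ₁, C₂, C₃), U_{C,ω,C} = −∫ e^{(1−v)⟨y∂₁⟩ + v⟨y∂₃⟩}[2 + (1−u)⟨∂₂∂₁⟩ + u⟨∂₂∂₃⟩](ϖ₂, C₁, C₃) − (u↔v term), U_{C,C,ω} = +∫ e^{(1−u)⟨y∂₁⟩ + u⟨y∂₂⟩}[2 + (1−v)⟨∂₃∂₁⟩ + v⟨∂₃∂₂⟩](ϖ₃, C₁, C₂), where ϖ(y) = ϖ_{αβ} y^α y^β is quadratic in y. Then after bringing ϖ to the first slot (C's are even, so reordering only flips signs of the corresponding ⟨∂∂⟩ contractions), the sub-vertices cancel pairwise under the change of variables u↔v, so U(ω,C,C)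 = 0. -/
open MvPolynomial

noncomputable section

/-- Variables: slot 0 is the output y, slots 1, 2, 3 carry the three arguments. -/
abbrev V4 := Fin 4 × Idx

/-- ⟨y ∂ᵢ⟩ = y^α ∂/∂yᵢ^α. -/
def AngY (i : Fin 4) (p : MvPolynomial V4 ℂ) : MvPolynomial V4 ℂ :=
  ∑ a : Fin 2, X ((0 : Fin 4), Sum.inl a) * pderiv (i, Sum.inl a) p

/-- ⟨∂ᵢ ∂ⱼ⟩ = ∂ᵢ^α ∂_{jα}. -/
def DD (i j : Fin 4) (p : MvPolynomial V4 ℂ) : MvPolynomial V4 ℂ :=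
  ∑ a : Fin 2, ∑ b : Fin 2, eps a b • pderiv (i, Sum.inl b) (pderiv (j, Sum.inl a) p)

/-- Exponential of a locally nilpotent operator applied to a polynomial
(the series truncates at the total degree). -/
def expA (D : MvPolynomial V4 ℂ → MvPolynomial V4 ℂ) (p : MvPolynomial V4 ℂ) :
    MvPolynomial V4 ℂ :=
  ∑ k ∈ Finset.range (p.totalDegree + 1), ((k.factorial : ℂ))⁻¹ • D^[k] p

/-- Place three arguments into the slots 1, 2, 3. -/
def put (f1 f2 f3 : MvPolynomial Idx ℂ) : MvPolynomial V4 ℂ :=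
  rename (fun v => ((1 : Fin 4), v)) f1 * rename (fun v => ((2 : Fin 4), v)) f2 *
    rename (fun v => ((3 : Fin 4), v)) f3

/-- Set the auxiliary variables yᵢ = 0 (i = 1,2,3), keeping the output variables. -/
def setz (p : MvPolynomial V4 ℂ) : MvPolynomial Idx ℂ :=
  aeval (fun v : V4 => if v.1 = 0 then X v.2 else 0) p

/-- Sub-vertex U_{ω,C,C}: e^{(1−u)⟨y∂₃⟩+u⟨y∂₂⟩}[2+(1−v)⟨∂₁∂₃⟩+v⟨∂₁∂₂⟩](ϖ₁,C₂,C₃). -/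
def subU1 (ϖ Ca Cb : MvPolynomial Idx ℂ) (u v : ℝ) : MvPolynomial Idx ℂ :=
  setz (expA (fun p => ((1 - u : ℝ) : ℂ) • AngY 3 p + ((u : ℝ) : ℂ) • AngY 2 p)
    ((2 : ℂ) • put ϖ Ca Cb + ((1 - v : ℝ) : ℂ) • DD 1 3 (put ϖ Ca Cb)
      + ((v : ℝ) : ℂ) • DD 1 2 (put ϖ Ca Cb)))

/-- First sub-vertex of U_{C,ω,C}:
e^{(1−v)⟨y∂₁⟩+v⟨y∂₃⟩}[2+(1−u)⟨∂₂∂₁⟩+u⟨∂₂∂₃⟩](ϖ₂,C₁,C₃). -/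
def subU2 (ϖ Ca Cb : MvPolynomial Idx ℂ) (u v : ℝ) : MvPolynomial Idx ℂ :=
  setz (expA (fun p => ((1 - v : ℝ) : ℂ) • AngY 1 p + ((v : ℝ) : ℂ) • AngY 3 p)
    ((2 : ℂ) • put Ca ϖ Cb + ((1 - u : ℝ) : ℂ) • DD 2 1 (put Ca ϖ Cb)
      + ((u : ℝ) : ℂ) • DD 2 3 (put Ca ϖ Cb)))

/-- Sub-vertex U_{C,C,ω}: e^{(1−u)⟨y∂₁⟩+u⟨y∂₂⟩}[2+(1−v)⟨∂₃∂₁⟩+v⟨∂₃∂₂⟩](ϖ₃,C₁,C₂). -/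
def subU3 (ϖ Ca Cb : MvPolynomial Idx ℂ) (u v : ℝ) : MvPolynomial Idx ℂ :=
  setz (expA (fun p => ((1 - u : ℝ) : ℂ) • AngY 1 p + ((u : ℝ) : ℂ) • AngY 2 p)
    ((2 : ℂ) • put Ca Cb ϖ + ((1 - v : ℝ) : ℂ) • DD 3 1 (put Ca Cb ϖ)
      + ((v : ℝ) : ℂ) • DD 3 2 (put Ca Cb ϖ)))

/-!
Relabelling the argument slots by a permutation that fixes the output slot identifies every
sub-vertex with `U_{C,ω,C}`: the transposition of slots 1 and 2 together with `u ↦ 1 - v`,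
`v ↦ 1 - u` carries `U_{ω,C,C}` to it, and the transposition of slots 2 and 3 together with
`u ↔ v` carries `U_{C,C,ω}` to it. Writing `G (u, v)` for `U_{C,ω,C}`, the integrand is therefore
`G (1 - v, 1 - u) - G (u, v)`, whose integral over the unit square vanishes because
`(u, v) ↦ (1 - v, 1 - u)` preserves the square. The only analytic input is the continuity of `G`:
each `⟨y∂ᵢ⟩` with `i ≠ 0` lowers the degree in the auxiliary variables by one, so the exponential
truncates at an order independent of `(u, v)` and `G` is a polynomial in `u` and `v`.
-/

namespace MvPolynomial

theorem iterate_eq_zero_of_lowers_weight {σ R : Type*} [CommSemiring R] (w : σ → ℕ)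
    {D : MvPolynomial σ R → MvPolynomial σ R}
    (hD : ∀ q m, m ∈ (D q).support → ∃ s ∈ q.support, s.weight w = m.weight w + 1)
    {q : MvPolynomial σ R} {k : ℕ} (hk : ∀ s ∈ q.support, s.weight w < k) :
    D^[k] q = 0 := by
  have key : ∀ n q m, m ∈ (D^[n] q).support → ∃ s ∈ q.support, s.weight w = m.weight w + n := by
    intro n
    induction n with
    | zero => exact fun q m hm => ⟨m, hm, rfl⟩
    | succ n ih =>
      intro q m hm
      rw [Function.iterate_succ_apply'] at hm
      obtain ⟨s, hs, hsm⟩ := hD _ m hm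
      obtain ⟨r, hr, hrs⟩ := ih q s hs
      exact ⟨r, hr, by omega⟩
  by_contra h
  obtain ⟨m, hm⟩ := Finset.nonempty_iff_ne_empty.mpr (mt support_eq_empty.mp h)
  obtain ⟨s, hs, hsm⟩ := key k q m hm
  have := hk s hs
  omega

theorem weight_le_totalDegree {σ R : Type*} [CommSemiring R] {w : σ → ℕ} (hw : ∀ x, w x ≤ 1)
    {q : MvPolynomial σ R} {s : σ →₀ ℕ} (hs : s ∈ q.support) : s.weight w ≤ q.totalDegree := by
  refine le_trans ?_ (le_totalDegree hs)
  rw [Finsupp.weight_apply]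
  exact Finset.sum_le_sum fun x _ => mul_le_of_le_one_right (Nat.zero_le _) (hw x)

theorem totalDegree_smul_add_smul_add_smul_le {σ R : Type*} [CommSemiring R] (c₁ c₂ c₃ : R)
    (P Q S : MvPolynomial σ R) :
    (c₁ • P + c₂ • Q + c₃ • S).totalDegree ≤
      max P.totalDegree (max Q.totalDegree S.totalDegree) := by
  refine (totalDegree_add _ _).trans (max_le ((totalDegree_add _ _).trans (max_le ?_ ?_)) ?_)
  · exact (totalDegree_smul_le _ _).trans (le_max_left _ _)
  · exact (totalDegree_smul_le _ _).trans ((le_max_left _ _).trans (le_max_right _ _))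
  · exact (totalDegree_smul_le _ _).trans ((le_max_right _ _).trans (le_max_right _ _))

end MvPolynomial

theorem Continuous.apply_pow_smul_add_smul {𝕜 M X : Type*} [CommSemiring 𝕜]
    [TopologicalSpace 𝕜] [IsTopologicalSemiring 𝕜] [AddCommMonoid M] [Module 𝕜 M]
    [TopologicalSpace X] (L : M →ₗ[𝕜] 𝕜) (A B : Module.End 𝕜 M) {c d : X → 𝕜} (hc : Continuous c)
    (hd : Continuous d) (k : ℕ) (v : M) :
    Continuous fun x => L (((c x • A + d x • B) ^ k) v) := by
  induction k generalizing v with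
  | zero => exact continuous_const (y := L v)
  | succ k ih =>
    simp only [pow_succ, Module.End.mul_apply, LinearMap.add_apply, LinearMap.smul_apply,
      map_add, map_smul, smul_eq_mul]
    exact (hc.mul (ih (A v))).add (hd.mul (ih (B v)))

theorem integral_integral_comp_reflect {E : Type*} [NormedAddCommGroup E] [NormedSpace ℝ E]
    {f : ℝ → ℝ → E} (hf : Continuous (Function.uncurry f)) (a b : ℝ) :
    ∫ u in a..b, ∫ v in a..b, f (a + b - v) (a + b - u) = ∫ u in a..b, ∫ v in a..b, f u v := by
  have hswap : ∫ u in a..b, ∫ v in a..b, f v u = ∫ u in a..b, ∫ v in a..b, f u v :=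
    MeasureTheory.intervalIntegral_intervalIntegral_swap
      ((hf.continuousOn.integrableOn_compact (isCompact_uIcc.prod isCompact_uIcc)).mono_set
        (Set.prod_mono Set.uIoc_subset_uIcc Set.uIoc_subset_uIcc)) |>.symm
  have hinner : ∀ u, ∫ v in a..b, f (a + b - v) (a + b - u) = ∫ v in a..b, f v (a + b - u) :=
    fun u => by
      simpa using intervalIntegral.integral_comp_sub_left (a := a) (b := b)
        (fun v => f v (a + b - u)) (a + b)
  simp_rw [hinner]
  simpa [hswap] using intervalIntegral.integral_comp_sub_left (a := a) (b := b)
    (fun u => ∫ v in a..b, f v u) (a + b)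

theorem integral_integral_comp_reflect_sub_eq_zero {E : Type*} [NormedAddCommGroup E]
    [NormedSpace ℝ E] {f : ℝ → ℝ → E} (hf : Continuous (Function.uncurry f)) (a b : ℝ) :
    ∫ u in a..b, ∫ v in a..b, (f (a + b - v) (a + b - u) - f u v) = 0 := by
  have hint : ∀ {g : ℝ → ℝ → E}, Continuous (Function.uncurry g) → ∀ u,
      IntervalIntegrable (g u) MeasureTheory.volume a b := fun hg u =>
    (hg.comp (Continuous.prodMk_right u)).intervalIntegrable a b
  have hcont : ∀ {g : ℝ → ℝ → E}, Continuous (Function.uncurry g) →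
      Continuous fun u => ∫ v in a..b, g u v := fun hg =>
    intervalIntegral.continuous_parametric_intervalIntegral_of_continuous' hg a b
  have hrefl : Continuous (Function.uncurry fun u v => f (a + b - v) (a + b - u)) :=
    hf.comp ((continuous_const.sub continuous_snd).prodMk (continuous_const.sub continuous_fst))
  simp_rw [intervalIntegral.integral_sub (hint hrefl _) (hint hf _)]
  rw [intervalIntegral.integral_sub ((hcont hrefl).intervalIntegrable a b)
    ((hcont hf).intervalIntegrable a b), integral_integral_comp_reflect hf, sub_self]

def subVertex (a b i j k : Fin 4) (s t : ℝ) (P : MvPolynomial V4 ℂ) : MvPolynomial Idx ℂ :=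
  setz (expA (fun p => ((1 - s : ℝ) : ℂ) • AngY a p + ((s : ℝ) : ℂ) • AngY b p)
    ((2 : ℂ) • P + ((1 - t : ℝ) : ℂ) • DD i j P + ((t : ℝ) : ℂ) • DD i k P))

theorem subU2_eq_subVertex (ϖ Ca Cb : MvPolynomial Idx ℂ) (u v : ℝ) :
    subU2 ϖ Ca Cb u v = subVertex 1 3 2 1 3 v u (put Ca ϖ Cb) :=
  rfl

theorem subVertex_one_sub (a b i j k : Fin 4) (s t : ℝ) (P : MvPolynomial V4 ℂ) :
    subVertex b a i k j (1 - s) (1 - t) P = subVertex a b i j k s t P := by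
  have hD : (fun p => ((1 - (1 - s) : ℝ) : ℂ) • AngY b p + ((1 - s : ℝ) : ℂ) • AngY a p) =
      fun p => ((1 - s : ℝ) : ℂ) • AngY a p + ((s : ℝ) : ℂ) • AngY b p := by
    funext p; rw [sub_sub_cancel, add_comm]
  have harg : (2 : ℂ) • P + ((1 - (1 - t) : ℝ) : ℂ) • DD i k P + ((1 - t : ℝ) : ℂ) • DD i j P =
      (2 : ℂ) • P + ((1 - t : ℝ) : ℂ) • DD i j P + ((t : ℝ) : ℂ) • DD i k P := by
    rw [sub_sub_cancel, add_right_comm]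
  rw [subVertex, hD, harg, subVertex]

def slotPerm (σ : Equiv.Perm (Fin 4)) : V4 ≃ V4 := σ.prodCongr (Equiv.refl Idx)

section slotPerm

variable (σ : Equiv.Perm (Fin 4))

theorem AngY_rename_slotPerm (h0 : σ 0 = 0) (i : Fin 4) (p : MvPolynomial V4 ℂ) :
    AngY (σ i) (rename (slotPerm σ) p) = rename (slotPerm σ) (AngY i p) := by
  simp only [AngY, map_sum, map_mul, rename_X]
  refine Finset.sum_congr rfl fun a _ => ?_
  rw [show ((σ i, Sum.inl a) : V4) = slotPerm σ (i, Sum.inl a) from rfl,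
    pderiv_rename (slotPerm σ).injective]
  simp [slotPerm, h0]

theorem DD_rename_slotPerm (i j : Fin 4) (p : MvPolynomial V4 ℂ) :
    DD (σ i) (σ j) (rename (slotPerm σ) p) = rename (slotPerm σ) (DD i j p) := by
  simp only [DD, map_sum, map_smul]
  refine Finset.sum_congr rfl fun a _ => Finset.sum_congr rfl fun b _ => ?_
  rw [show ((σ j, Sum.inl a) : V4) = slotPerm σ (j, Sum.inl a) from rfl,
    show ((σ i, Sum.inl b) : V4) = slotPerm σ (i, Sum.inl b) from rfl,
    pderiv_rename (slotPerm σ).injective, pderiv_rename (slotPerm σ).injective]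

theorem setz_rename_slotPerm (h0 : σ 0 = 0) (p : MvPolynomial V4 ℂ) :
    setz (rename (slotPerm σ) p) = setz p := by
  unfold setz
  rw [aeval_rename]
  congr 2
  funext x
  simp only [Function.comp_apply, slotPerm, Equiv.prodCongr_apply, Prod.map_fst,
    Prod.map_snd, Equiv.refl_apply, σ.injective.eq_iff' h0]

theorem rename_slotPerm_put (f₁ f₂ f₃ : MvPolynomial Idx ℂ) :
    rename (slotPerm σ) (put f₁ f₂ f₃) =
      rename (fun v => (σ 1, v)) f₁ * rename (fun v => (σ 2, v)) f₂ *
        rename (fun v => (σ 3, v)) f₃ := by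
  simp only [put, map_mul, rename_rename]
  rfl

end slotPerm

theorem expA_rename (e : V4 ≃ V4) {D D' : MvPolynomial V4 ℂ → MvPolynomial V4 ℂ}
    (h : ∀ q, D' (rename e q) = rename e (D q)) (p : MvPolynomial V4 ℂ) :
    expA D' (rename e p) = rename e (expA D p) := by
  have hiter : ∀ k q, D'^[k] (rename e q) = rename e (D^[k] q) := by
    intro k
    induction k with
    | zero => exact fun q => rfl
    | succ n ih => intro q; rw [Function.iterate_succ_apply, Function.iterate_succ_apply, h, ih]
  simp only [expA, map_sum, map_smul, hiter]
  rw [← renameEquiv_apply, totalDegree_renameEquiv]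

theorem subVertex_rename_slotPerm (σ : Equiv.Perm (Fin 4)) (h0 : σ 0 = 0)
    (a b i j k : Fin 4) (s t : ℝ) (P : MvPolynomial V4 ℂ) :
    subVertex (σ a) (σ b) (σ i) (σ j) (σ k) s t (rename (slotPerm σ) P) =
      subVertex a b i j k s t P := by
  unfold subVertex
  simp only [DD_rename_slotPerm, ← map_smul, ← map_add]
  rw [expA_rename (slotPerm σ) (fun q => by
    simp only [AngY_rename_slotPerm σ h0, ← map_smul, ← map_add]; rfl),
    setz_rename_slotPerm σ h0]

theorem subU3_eq_subU2_swap (ϖ Ca Cb : MvPolynomial Idx ℂ) (u v : ℝ) :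
    subU3 ϖ Ca Cb u v = subU2 ϖ Ca Cb v u := by
  have h :=
    subVertex_rename_slotPerm (Equiv.swap 2 3) (by decide) 1 2 3 1 2 u v (put Ca Cb ϖ)
  rw [rename_slotPerm_put, mul_right_comm] at h
  simp only [Equiv.swap_apply_left, Equiv.swap_apply_right,
    Equiv.swap_apply_of_ne_of_ne (show (1 : Fin 4) ≠ 2 by decide)
      (show (1 : Fin 4) ≠ 3 by decide)] at h
  exact h.symm

theorem subU1_eq_subU2 (ϖ Ca Cb : MvPolynomial Idx ℂ) (u v : ℝ) :
    subU1 ϖ Ca Cb u v = subU2 ϖ Ca Cb (1 - v) (1 - u) := by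
  have h :=
    subVertex_rename_slotPerm (Equiv.swap 1 2) (by decide) 3 2 1 3 2 u v (put ϖ Ca Cb)
  rw [rename_slotPerm_put] at h
  simp only [Equiv.swap_apply_left, Equiv.swap_apply_right,
    Equiv.swap_apply_of_ne_of_ne (show (3 : Fin 4) ≠ 1 by decide)
      (show (3 : Fin 4) ≠ 2 by decide)] at h
  rw [mul_comm (rename _ ϖ), ← subVertex_one_sub] at h
  exact h.symm

def auxWeight : V4 → ℕ := fun x => if x.1 = 0 then 0 else 1

theorem auxWeight_le_one (x : V4) : auxWeight x ≤ 1 := by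
  unfold auxWeight
  split_ifs <;> simp

theorem AngY_lowers_auxWeight {i : Fin 4} (hi : i ≠ 0) (q : MvPolynomial V4 ℂ)
    (m : V4 →₀ ℕ) (hm : m ∈ (AngY i q).support) :
    ∃ s ∈ q.support, s.weight auxWeight = m.weight auxWeight + 1 := by
  obtain ⟨a, -, hma⟩ := Finset.mem_biUnion.mp (support_sum hm)
  rw [support_X_mul] at hma
  obtain ⟨m', hm', rfl⟩ := Finset.mem_map.mp hma
  have hs : m' + Finsupp.single (i, Sum.inl a) 1 ∈ q.support := by
    rw [mem_support_iff, coeff_pderiv] at hm'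
    exact mem_support_iff.mpr (left_ne_zero_of_mul hm')
  refine ⟨_, hs, ?_⟩
  simp [Finsupp.weight_single, auxWeight, hi]

theorem iterate_smul_AngY_add_smul_AngY_eq_zero {a b : Fin 4} (ha : a ≠ 0) (hb : b ≠ 0)
    (c d : ℂ) {q : MvPolynomial V4 ℂ} {k : ℕ} (hk : q.totalDegree < k) :
    (fun p => c • AngY a p + d • AngY b p)^[k] q = 0 := by
  refine iterate_eq_zero_of_lowers_weight auxWeight (fun q m hm => ?_)
    fun s hs => (weight_le_totalDegree auxWeight_le_one hs).trans_lt hk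
  rcases Finset.mem_union.mp (support_add hm) with hm | hm
  · exact AngY_lowers_auxWeight ha q m (support_smul hm)
  · exact AngY_lowers_auxWeight hb q m (support_smul hm)

theorem expA_eq_sum_range_of_le {D : MvPolynomial V4 ℂ → MvPolynomial V4 ℂ}
    {q : MvPolynomial V4 ℂ}
    (hD : ∀ k, q.totalDegree < k → D^[k] q = 0) {N : ℕ} (hN : q.totalDegree ≤ N) :
    expA D q = ∑ k ∈ Finset.range (N + 1), ((k.factorial : ℂ))⁻¹ • D^[k] q := by
  refine Finset.sum_subset (Finset.range_subset_range.mpr (by omega)) fun k _ hk => ?_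
  rw [hD k (by simpa using hk), smul_zero]

def angYEnd (i : Fin 4) : Module.End ℂ (MvPolynomial V4 ℂ) :=
  ∑ a : Fin 2,
    LinearMap.mulLeft ℂ (X ((0 : Fin 4), Sum.inl a)) ∘ₗ (pderiv (i, Sum.inl a)).toLinearMap

theorem angYEnd_apply (i : Fin 4) (p : MvPolynomial V4 ℂ) : angYEnd i p = AngY i p := by
  simp [angYEnd, AngY]

def evalSetz (w : Idx → ℂ) : MvPolynomial V4 ℂ →ₗ[ℂ] ℂ :=
  ((aeval w).comp
    (aeval fun v : V4 => if v.1 = 0 then (X v.2 : MvPolynomial Idx ℂ) else 0)).toLinearMap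

theorem evalSetz_apply (w : Idx → ℂ) (p : MvPolynomial V4 ℂ) : evalSetz w p = eval w (setz p) :=
  rfl

theorem continuous_eval_subVertex {a b : Fin 4} (ha : a ≠ 0) (hb : b ≠ 0) (i j k : Fin 4)
    (P : MvPolynomial V4 ℂ) (w : Idx → ℂ) :
    Continuous fun st : ℝ × ℝ => eval w (subVertex a b i j k st.1 st.2 P) := by
  let N := max P.totalDegree (max (DD i j P).totalDegree (DD i k P).totalDegree)
  let T : ℝ → Module.End ℂ (MvPolynomial V4 ℂ) :=
    fun s => ((1 - s : ℝ) : ℂ) • angYEnd a + ((s : ℝ) : ℂ) • angYEnd b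
  let f : ℕ → MvPolynomial V4 ℂ → ℝ → ℂ := fun n x s => evalSetz w ((T s ^ n) x)
  have hf : ∀ n x, Continuous (f n x) := fun n x =>
    Continuous.apply_pow_smul_add_smul (evalSetz w) (angYEnd a) (angYEnd b) (by fun_prop)
      (by fun_prop) n x
  have hT : ∀ s : ℝ, (fun p => ((1 - s : ℝ) : ℂ) • AngY a p + ((s : ℝ) : ℂ) • AngY b p) = T s :=
    fun s => funext fun p => by simp [T, angYEnd_apply]
  have hexp : ∀ s t : ℝ, eval w (subVertex a b i j k s t P) =
      ∑ n ∈ Finset.range (N + 1), ((n.factorial : ℂ))⁻¹ *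
        (2 * f n P s + ((1 - t : ℝ) : ℂ) * f n (DD i j P) s +
          ((t : ℝ) : ℂ) * f n (DD i k P) s) := by
    intro s t
    rw [subVertex, ← evalSetz_apply, expA_eq_sum_range_of_le
      (fun n hn => iterate_smul_AngY_add_smul_AngY_eq_zero ha hb _ _ hn)
      (totalDegree_smul_add_smul_add_smul_le _ _ _ _ _ _), map_sum, hT]
    refine Finset.sum_congr rfl fun n _ => ?_
    rw [← Module.End.coe_pow]
    simp only [f, map_smul, map_add, smul_eq_mul]
  simp only [hexp]
  fun_prop

theorem continuous_eval_subU2 (ϖ Ca Cb : MvPolynomial Idx ℂ) (w : Idx → ℂ) :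
    Continuous (Function.uncurry fun u v => eval w (subU2 ϖ Ca Cb u v)) := by
  have h := (continuous_eval_subVertex (a := 1) (b := 3) (by decide) (by decide) 2 1 3
    (put Ca ϖ Cb) w).comp continuous_swap
  simp only [subU2_eq_subVertex]
  exact h

theorem cubic_vertex_on_spin_connection_vanishes_general
    (ϖ Ca Cb : MvPolynomial Idx ℂ) :
    ∀ w : Idx → ℂ,
      (∫ u in (0:ℝ)..1, ∫ v in (0:ℝ)..1,
        (eval w (subU1 ϖ Ca Cb u v)
          - eval w (subU2 ϖ Ca Cb u v)
          - eval w (subU2 ϖ Ca Cb v u)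
          + eval w (subU3 ϖ Ca Cb u v))) = 0 := by
  intro w
  have hcancel : ∀ u v : ℝ, eval w (subU1 ϖ Ca Cb u v) - eval w (subU2 ϖ Ca Cb u v)
      - eval w (subU2 ϖ Ca Cb v u) + eval w (subU3 ϖ Ca Cb u v) =
        eval w (subU2 ϖ Ca Cb (0 + 1 - v) (0 + 1 - u)) - eval w (subU2 ϖ Ca Cb u v) := by
    intro u v
    rw [subU1_eq_subU2, subU3_eq_subU2_swap, zero_add]
    ring
  simp_rw [hcancel]
  exact integral_integral_comp_reflect_sub_eq_zero
    (f := fun u v => eval w (subU2 ϖ Ca Cb u v)) (continuous_eval_subU2 ϖ Ca Cb w) 0 1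

/-- The cubic vertex U(ω,C,C) = U_{ω,C,C} + U_{C,ω,C} + U_{C,C,ω} vanishes on a
Lorentz spin connection ϖ(y) = ϖ_{αβ} y^α y^β: after reordering, the sub-vertices
cancel pairwise under u↔v, so U(ω,C,C) = 0 (evaluated at any point w). -/
theorem cubic_vertex_on_spin_connection_vanishes
    (ϖ Ca Cb : MvPolynomial Idx ℂ)
    (hϖ : ∃ Mat : Fin 2 → Fin 2 → ℂ,
      ϖ = ∑ a : Fin 2, ∑ b : Fin 2, C (Mat a b) * (X (Sum.inl a) * X (Sum.inl b))) :
    ∀ w : Idx → ℂ,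
      (∫ u in (0:ℝ)..1, ∫ v in (0:ℝ)..1,
        (eval w (subU1 ϖ Ca Cb u v)
          - eval w (subU2 ϖ Ca Cb u v)
          - eval w (subU2 ϖ Ca Cb v u)
          + eval w (subU3 ϖ Ca Cb u v))) = 0 :=
  cubic_vertex_on_spin_connection_vanishes_general ϖ Ca Cb
end
end
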